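/- Let α > 0 and let the noise density be Pareto: f_ε(ε) = α(1 + ε)^{−α−1} for ε ≥ 0 and f_ε(ε) = 0 for ε < 0. Let x̄ ∈ ℝ and let μ be a Borel probability measure on ℝ with μ((−∞, x̄]) = 1. Define the posterior cdf F(w|z) := (∫_{(−∞,w]} f_ε(z − x) dμ(x)) / (∫_{(−∞,x̄]} f_ε(z − x) dμ(x)) for z ≥ x̄. Then for all z2 > z1 ≥ x̄ and all w with 0 < μ((−∞, w]) < 1: F(w|z1) < F(w|z2). That is, with Pareto (thicker-than-exponential-tailed) noise, for every pair of signals above the upper bound of X, the posterior given the lower signal strictly first-order stochastically dominates the posterior given the higher signal. -/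

import Mathlib

/-!
The likelihood ratio `f_ε(z₂ - x) / f_ε(z₁ - x)` of the Pareto density is strictly decreasing in
`x ≤ z₁`, since `(1 + z₁ - x) / (1 + z₂ - x)` strictly decreases. Comparing both posteriors with
the ratio at the pivot `w`, the higher signal gives relatively more weight to `(-∞, w]` than to
`(w, x̄]`, and the latter has positive prior mass.
-/

open MeasureTheory Set

/-- The Pareto noise density `f_ε(ε) = α(1+ε)^{−α−1}` for `ε ≥ 0`, `0` for
`ε < 0`. -/
noncomputable def paretoDen (α ε : ℝ) : ℝ :=
  if 0 ≤ ε then α * (1 + ε) ^ (-(α + 1)) else 0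

/-- The posterior cdf of `X` given `Z = z` with Pareto noise. -/
noncomputable def postCdfPareto (μ : Measure ℝ) (α xbar w z : ℝ) : ℝ :=
  (∫ x in Iic w, paretoDen α (z - x) ∂μ) / (∫ x in Iic xbar, paretoDen α (z - x) ∂μ)

/-- `g₂ / g₁` is strictly decreasing on `s` (strict monotone likelihood ratio), cross-multiplied
so that no division occurs. -/
def StrictAntiRatioOn (g₁ g₂ : ℝ → ℝ) (s : Set ℝ) : Prop :=
  ∀ ⦃x⦄, x ∈ s → ∀ ⦃y⦄, y ∈ s → x < y → g₂ y * g₁ x < g₁ y * g₂ x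

theorem StrictAntiRatioOn.mono {g₁ g₂ : ℝ → ℝ} {s t : Set ℝ} (h : StrictAntiRatioOn g₁ g₂ s)
    (hts : t ⊆ s) : StrictAntiRatioOn g₁ g₂ t :=
  fun _ hx _ hy hxy => h (hts hx) (hts hy) hxy

theorem setIntegral_pos_of_forall_pos {X : Type*} [MeasurableSpace X] {μ : Measure X}
    {f : X → ℝ} {s : Set X} (hs : MeasurableSet s) (hf : IntegrableOn f s μ)
    (hpos : ∀ x ∈ s, 0 < f x) (hμs : 0 < μ s) : 0 < ∫ x in s, f x ∂μ := by
  rw [setIntegral_pos_iff_support_of_nonneg_ae ((ae_restrict_iff' hs).2 <| .of_forall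
    fun x hx => (hpos x hx).le) hf]
  exact hμs.trans_le <| measure_mono fun x hx => ⟨(hpos x hx).ne', hx⟩

theorem div_add_lt_div_add_of_pivot {A₁ A₂ C₁ C₂ p₁ p₂ : ℝ} (hp₁ : 0 < p₁) (hA₁ : 0 < A₁)
    (hC₁ : 0 < C₁) (h₂ : 0 < A₂ + C₂) (hlow : p₂ * A₁ ≤ p₁ * A₂) (hhigh : p₁ * C₂ < p₂ * C₁) :
    A₁ / (A₁ + C₁) < A₂ / (A₂ + C₂) := by
  have hcross : A₁ * C₂ < A₂ * C₁ := by
    refine lt_of_mul_lt_mul_left ?_ hp₁.le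
    calc p₁ * (A₁ * C₂) = A₁ * (p₁ * C₂) := by ring
      _ < A₁ * (p₂ * C₁) := mul_lt_mul_of_pos_left hhigh hA₁
      _ = C₁ * (p₂ * A₁) := by ring
      _ ≤ C₁ * (p₁ * A₂) := mul_le_mul_of_nonneg_left hlow hC₁.le
      _ = p₁ * (A₂ * C₁) := by ring
  rw [div_lt_div_iff₀ (by positivity) h₂]
  linarith

theorem setIntegral_Iic_eq_add_Ioc {μ : Measure ℝ} {g : ℝ → ℝ} {w b : ℝ} (hwb : w ≤ b)
    (hg : IntegrableOn g (Iic b) μ) :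
    ∫ x in Iic b, g x ∂μ = (∫ x in Iic w, g x ∂μ) + ∫ x in Ioc w b, g x ∂μ := by
  rw [← Iic_union_Ioc_eq_Iic hwb]
  exact setIntegral_union (Iic_disjoint_Ioc le_rfl) measurableSet_Ioc
    (hg.mono_set (Iic_subset_Iic.2 hwb)) (hg.mono_set Ioc_subset_Iic_self)

theorem setIntegral_Iic_div_lt_of_strictAntiRatioOn {μ : Measure ℝ} {g₁ g₂ : ℝ → ℝ} {w b : ℝ}
    (hg₁ : IntegrableOn g₁ (Iic b) μ) (hg₂ : IntegrableOn g₂ (Iic b) μ)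
    (hpos₁ : ∀ x ≤ b, 0 < g₁ x) (hpos₂ : ∀ x ≤ b, 0 < g₂ x)
    (hratio : StrictAntiRatioOn g₁ g₂ (Iic b))
    (hμw : 0 < μ (Iic w)) (hμwb : 0 < μ (Ioc w b)) :
    (∫ x in Iic w, g₁ x ∂μ) / (∫ x in Iic b, g₁ x ∂μ) <
      (∫ x in Iic w, g₂ x ∂μ) / (∫ x in Iic b, g₂ x ∂μ) := by
  have hwb : w < b := by
    by_contra! h
    simp [Ioc_eq_empty_of_le h] at hμwb
  have hsub_w : Iic w ⊆ Iic b := Iic_subset_Iic.2 hwb.le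
  have hsub_wb : Ioc w b ⊆ Iic b := Ioc_subset_Iic_self
  set A₁ := ∫ x in Iic w, g₁ x ∂μ
  set A₂ := ∫ x in Iic w, g₂ x ∂μ
  set C₁ := ∫ x in Ioc w b, g₁ x ∂μ
  set C₂ := ∫ x in Ioc w b, g₂ x ∂μ
  have hA₁ : 0 < A₁ := setIntegral_pos_of_forall_pos measurableSet_Iic (hg₁.mono_set hsub_w)
    (fun x hx => hpos₁ x (hsub_w hx)) hμw
  have hC₁ : 0 < C₁ := setIntegral_pos_of_forall_pos measurableSet_Ioc (hg₁.mono_set hsub_wb)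
    (fun x hx => hpos₁ x (hsub_wb hx)) hμwb
  have hw : w ∈ Iic b := hwb.le
  have hlow : g₂ w * A₁ ≤ g₁ w * A₂ := by
    rw [← integral_const_mul, ← integral_const_mul]
    refine setIntegral_mono_on ((hg₁.mono_set hsub_w).const_mul _)
      ((hg₂.mono_set hsub_w).const_mul _) measurableSet_Iic fun x hx => ?_
    rcases (mem_Iic.1 hx).eq_or_lt with rfl | hxw
    · rw [mul_comm]
    · exact (hratio (hsub_w hx) hw hxw).le
  have hhigh : g₁ w * C₂ < g₂ w * C₁ := by
    have h := setIntegral_pos_of_forall_pos (f := fun y => g₂ w * g₁ y - g₁ w * g₂ y)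
      measurableSet_Ioc
      (((hg₁.mono_set hsub_wb).const_mul (g₂ w)).sub ((hg₂.mono_set hsub_wb).const_mul (g₁ w)))
      (fun y hy => by linarith [hratio hw (hsub_wb hy) hy.1]) hμwb
    rw [integral_sub ((hg₁.mono_set hsub_wb).const_mul _) ((hg₂.mono_set hsub_wb).const_mul _),
      integral_const_mul, integral_const_mul] at h
    linarith
  have h₂ : 0 < ∫ x in Iic b, g₂ x ∂μ := setIntegral_pos_of_forall_pos measurableSet_Iic hg₂
    hpos₂ (hμw.trans_le (measure_mono hsub_w))
  rw [setIntegral_Iic_eq_add_Ioc hwb.le hg₂] at h₂ ⊢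
  rw [setIntegral_Iic_eq_add_Ioc hwb.le hg₁]
  exact div_add_lt_div_add_of_pivot (hpos₁ w hw) hA₁ hC₁ h₂ hlow hhigh

section Pareto

variable {α : ℝ}

theorem paretoDen_of_nonneg {ε : ℝ} (hε : 0 ≤ ε) :
    paretoDen α ε = α * (1 + ε) ^ (-(α + 1)) := if_pos hε

theorem paretoDen_pos (hα : 0 < α) {ε : ℝ} (hε : 0 ≤ ε) : 0 < paretoDen α ε := by
  rw [paretoDen_of_nonneg hε]
  have : 0 < 1 + ε := by linarith
  positivity

theorem paretoDen_nonneg (hα : 0 ≤ α) (ε : ℝ) : 0 ≤ paretoDen α ε := by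
  unfold paretoDen
  split_ifs <;> positivity

theorem paretoDen_le (hα : 0 ≤ α) (ε : ℝ) : paretoDen α ε ≤ α := by
  unfold paretoDen
  split_ifs with hε
  · exact mul_le_of_le_one_right hα
      (Real.rpow_le_one_of_one_le_of_nonpos (by linarith) (by linarith))
  · exact hα

theorem measurable_paretoDen (α : ℝ) : Measurable (paretoDen α) :=
  Measurable.ite measurableSet_Ici
    (measurable_const.mul ((measurable_const.add measurable_id).pow_const _)) measurable_const

theorem integrable_paretoDen_sub (hα : 0 ≤ α) (z : ℝ) (μ : Measure ℝ) [IsFiniteMeasure μ] :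
    Integrable (fun x => paretoDen α (z - x)) μ :=
  .of_bound
    ((measurable_paretoDen α).comp (measurable_const.sub measurable_id)).aestronglyMeasurable α <|
    .of_forall fun x => by
      rw [Real.norm_of_nonneg (paretoDen_nonneg hα _)]
      exact paretoDen_le hα _

theorem paretoDen_mul_paretoDen {a b : ℝ} (ha : 0 ≤ a) (hb : 0 ≤ b) :
    paretoDen α a * paretoDen α b = α ^ 2 * ((1 + a) * (1 + b)) ^ (-(α + 1)) := by
  rw [paretoDen_of_nonneg ha, paretoDen_of_nonneg hb, Real.mul_rpow (by linarith) (by linarith)]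
  ring

theorem strictAntiRatioOn_paretoDen (hα : 0 < α) {z₁ z₂ : ℝ} (hz : z₁ < z₂) :
    StrictAntiRatioOn (fun x => paretoDen α (z₁ - x)) (fun x => paretoDen α (z₂ - x))
      (Iic z₁) := by
  intro x hx y hy hxy
  simp only [mem_Iic] at hx hy
  rw [paretoDen_mul_paretoDen (by linarith) (by linarith),
    paretoDen_mul_paretoDen (by linarith) (by linarith)]
  refine mul_lt_mul_of_pos_left (Real.rpow_lt_rpow_of_neg ?_ ?_ (by linarith)) (by positivity)
  · nlinarith
  · nlinarith [mul_pos (sub_pos.2 hxy) (sub_pos.2 hz)]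

end Pareto

/-- Let `α > 0`, let the noise be Pareto with density
`f_ε(ε) = α(1+ε)^{−α−1}` on `[0,∞)`, and let `X ≤ x̄` have prior `μ`. Then
for all signals `z2 > z1 ≥ x̄` and all `w` with `0 < μ((−∞,w]) < 1`,
`F(w|z1) < F(w|z2)`: the posterior given the lower signal strictly FOSDs
the posterior given the higher signal. -/
theorem stmt_17 (α : ℝ) (hα : 0 < α) (xbar : ℝ)
    (μ : Measure ℝ) [IsProbabilityMeasure μ]
    (hμ : μ (Iic xbar) = 1) :
    ∀ z1 z2 : ℝ, xbar ≤ z1 → z1 < z2 →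
      ∀ w : ℝ, 0 < μ (Iic w) → μ (Iic w) < 1 →
        postCdfPareto μ α xbar w z1 < postCdfPareto μ α xbar w z2 := by
  intro z1 z2 hz1 hz12 w hw0 hw1
  have hμwb : 0 < μ (Ioc w xbar) := by
    refine pos_of_ne_zero fun h => hw1.not_ge ?_
    calc 1 = μ (Iic xbar) := hμ.symm
      _ ≤ μ (Iic w) + μ (Ioc w xbar) :=
        (measure_mono Iic_subset_Iic_union_Ioc).trans (measure_union_le _ _)
      _ = μ (Iic w) := by rw [h, add_zero]
  exact setIntegral_Iic_div_lt_of_strictAntiRatioOn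
    (integrable_paretoDen_sub hα.le z1 μ).integrableOn
    (integrable_paretoDen_sub hα.le z2 μ).integrableOn
    (fun x hx => paretoDen_pos hα (by linarith)) (fun x hx => paretoDen_pos hα (by linarith))
    (StrictAntiRatioOn.mono (strictAntiRatioOn_paretoDen hα hz12) (Iic_subset_Iic.2 hz1)) hw0 hμwb
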